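/- arXiv:1807.09831 — 3 statements merged into one kernel-verified Lean document; each statement's English description precedes it below -/
import Mathlib

section
/- Let G ≤ Sym(M) act 2-homogeneously on M, where |M| = m ≥ 5, let V = F_2^m with G acting by permuting coordinates, and let C be a G-invariant F_2-subspace of V with minimum distance δ = 3. Then C is a perfect code, i.e., every vertex of V is at Hamming distance at most 1 from exactly one codeword of C; moreover C is (X,1)-neighbour-transitive, where X = T_C ⋊ G = {v ↦ v^σ + c : σ ∈ G, c ∈ C}. -/
open Equiv

namespace Paper

/-- A Hamming-graph automorphism of `Fin m → Q` given by entrywise permutations `h`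
and a permutation `σ` of the entries. -/
def IsQAutPair {m : ℕ} {Q : Type*} (g : Perm (Fin m → Q)) (h : Fin m → Perm Q)
    (σ : Perm (Fin m)) : Prop :=
  ∀ α i, g α i = h i (α (σ.symm i))

/-- `g` is an automorphism of the Hamming graph `H(m,q)`. -/
def IsQAut {m : ℕ} {Q : Type*} (g : Perm (Fin m → Q)) : Prop :=
  ∃ h σ, IsQAutPair g h σ

/-- The permutation group `X_i^{Q_i}` induced on the alphabet in entry `i`
by the stabiliser in `X` of the entry `i`. -/
def indQ {m : ℕ} {Q : Type*} (X : Set (Perm (Fin m → Q))) (i : Fin m) : Set (Perm Q) :=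
  {π | ∃ g ∈ X, ∃ h σ, IsQAutPair g h σ ∧ σ i = i ∧ h i = π}

/-- `C_s`, the set of vertices at Hamming distance exactly `s` from the code `C`. -/
def distSet {m : ℕ} {Q : Type*} [DecidableEq Q] (C : Set (Fin m → Q)) (s : ℕ) :
    Set (Fin m → Q) :=
  {v | (∃ c ∈ C, hammingDist v c = s) ∧ ∀ c ∈ C, s ≤ hammingDist v c}

/-- `C` is `(X,s)`-neighbour-transitive: `X` acts transitively on each of
`C = C_0, C_1, …, C_s`. -/
def NbrTrans {m : ℕ} {Q : Type*} [DecidableEq Q] (X : Set (Perm (Fin m → Q)))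
    (C : Set (Fin m → Q)) (s : ℕ) : Prop :=
  ∀ j ≤ s, ∀ u ∈ distSet C j, ∀ v ∈ distSet C j, ∃ g ∈ X, g u = v

/-- `δ` is the minimum distance of the code `C`. -/
def IsMinDist {m : ℕ} {Q : Type*} [DecidableEq Q] (C : Set (Fin m → Q)) (δ : ℕ) : Prop :=
  (∃ u ∈ C, ∃ v ∈ C, u ≠ v ∧ hammingDist u v = δ) ∧
  ∀ u ∈ C, ∀ v ∈ C, u ≠ v → δ ≤ hammingDist u v

/-- The vertex set `V = F_2^m` of the binary Hamming graph `H(m,2)`. -/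
abbrev BV (m : ℕ) : Type := Fin m → ZMod 2

/-- `g` is an automorphism of the binary Hamming graph `H(m,2)`:
`g : v ↦ v^σ + c` for some `σ ∈ Sym(M)` and `c ∈ V`. -/
def IsB2Aut {m : ℕ} (g : Perm (BV m)) : Prop :=
  ∃ (σ : Perm (Fin m)) (c : BV m), ∀ v, g v = (fun i => v (σ.symm i)) + c

/-- The dual of a binary code under the standard inner product. -/
def dualCode {m : ℕ} (D : Set (BV m)) : Set (BV m) :=
  {w | ∀ v ∈ D, (∑ i, v i * w i) = 0}


/-!
Any codeword of minimum weight 3 is moved by the 2-homogeneous group `G` so that its support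
contains any prescribed pair of coordinates. Adding such a word to `c` along two coordinates
where `v` and `c` differ corrects those two and spoils at most one more, so every vertex lies
within distance 1 of `C`; with `δ = 3` the codeword within distance 1 is unique. The vertices at
distance 1 are `c + eᵢ`, and since 2-homogeneity on at least three points gives transitivity,
`v ↦ v^σ + c'` maps any of them to any other.
-/

section Hamming

variable {ι β : Type*} [Fintype ι] [DecidableEq β]

theorem hammingNorm_comp_perm [Zero β] (x : ι → β) (σ : Perm ι) :
    hammingNorm (fun i => x (σ.symm i)) = hammingNorm x :=
  (Finset.card_equiv σ (by simp)).symm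

theorem hammingDist_add_four_le [Zero β] [DecidableEq ι] {x y : ι → β} {i j : ι} (hij : i ≠ j)
    (hi : x i = y i) (hj : x j = y j) (hxi : x i ≠ 0) (hxj : x j ≠ 0) :
    hammingDist x y + 4 ≤ hammingNorm x + hammingNorm y := by
  have hP : ∀ z : ι → β, z i ≠ 0 → z j ≠ 0 → {i, j} ⊆ ({k | z k ≠ 0} : Finset ι) := by
    intro z hzi hzj k hk
    rcases Finset.mem_insert.mp hk with rfl | hk
    · simpa using hzi
    · simpa [Finset.mem_singleton.mp hk] using hzj
  have hsub : ({k | x k ≠ y k} : Finset ι) ⊆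
      (({k | x k ≠ 0} : Finset ι) \ {i, j}) ∪ (({k | y k ≠ 0} : Finset ι) \ {i, j}) := by
    intro k hkmem
    have hk : x k ≠ y k := (Finset.mem_filter.mp hkmem).2
    have hkij : k ∉ ({i, j} : Finset ι) := by
      rintro hk'
      rcases Finset.mem_insert.mp hk' with rfl | hk'
      · exact hk hi
      · exact hk (Finset.mem_singleton.mp hk' ▸ hj)
    by_cases hxk : x k = 0
    · exact Finset.mem_union_right _ (by simp [hkij, ← hxk, Ne.symm hk])
    · exact Finset.mem_union_left _ (by simp [hkij, hxk])
  have hcard : ({i, j} : Finset ι).card = 2 := Finset.card_pair hij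
  have := (Finset.card_le_card hsub).trans (Finset.card_union_le _ _)
  rw [Finset.card_sdiff_of_subset (hP x hxi hxj),
    Finset.card_sdiff_of_subset (hP y (hi ▸ hxi) (hj ▸ hxj)), hcard] at this
  have hx2 := Finset.card_le_card (hP x hxi hxj)
  have hy2 := Finset.card_le_card (hP y (hi ▸ hxi) (hj ▸ hxj))
  rw [hcard] at hx2 hy2
  unfold hammingDist hammingNorm
  omega

theorem hammingDist_eq_hammingNorm_sub [AddGroup β] (x y : ι → β) :
    hammingDist x y = hammingNorm (x - y) := by
  simp_rw [hammingNorm, hammingDist, Pi.sub_apply, ne_eq, sub_eq_zero]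

theorem exists_eq_single_of_hammingNorm_eq_one [Zero β] [DecidableEq ι] {x : ι → β}
    (h : hammingNorm x = 1) : ∃ i, x = Pi.single i (x i) := by
  obtain ⟨i, hi⟩ := Finset.card_eq_one.mp h
  refine ⟨i, funext fun k => ?_⟩
  by_cases hk : k = i
  · subst hk; simp
  · have : k ∉ ({k | x k ≠ 0} : Finset ι) := hi ▸ Finset.notMem_singleton.mpr hk
    simpa [hk] using this

theorem eq_of_hammingDist_le_one {C : Set (ι → β)}
    (hδ : ∀ u ∈ C, ∀ v ∈ C, u ≠ v → 3 ≤ hammingDist u v) {v c c' : ι → β}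
    (hc : c ∈ C) (hc' : c' ∈ C) (hvc : hammingDist v c ≤ 1) (hvc' : hammingDist v c' ≤ 1) :
    c = c' := by
  by_contra hne
  have := hammingDist_triangle_left c c' v
  have := hδ c hc c' hc' hne
  omega

end Hamming

section TwoHomogeneous

variable {α : Type*}

def IsTwoHomogeneous (G : Subgroup (Perm α)) : Prop :=
  ∀ i j k l : α, i ≠ j → k ≠ l → ∃ σ ∈ G, (σ i = k ∧ σ j = l) ∨ (σ i = l ∧ σ j = k)

variable {G : Subgroup (Perm α)}

theorem IsTwoHomogeneous.exists_apply_eq (hG : IsTwoHomogeneous G) (h3 : 3 ≤ ENat.card α)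
    (i j : α) : ∃ σ ∈ G, σ i = j := by
  by_cases hij : i = j
  · exact ⟨1, G.one_mem, hij⟩
  obtain ⟨k, hki, hkj⟩ := ENat.exists_ne_ne_of_three_le h3 i j
  obtain ⟨σ, hσ, ⟨hσi, -⟩ | ⟨hσi, hσk⟩⟩ := hG i k j k (Ne.symm hki) (Ne.symm hkj)
  · exact ⟨σ, hσ, hσi⟩
  · exact ⟨σ * σ, G.mul_mem hσ hσ, by rw [Perm.mul_apply, hσi, hσk]⟩

theorem IsTwoHomogeneous.exists_symm_apply_mem (hG : IsTwoHomogeneous G) {S : Set α} {a b : α}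
    (hab : a ≠ b) (ha : a ∈ S) (hb : b ∈ S) {i j : α} (hij : i ≠ j) :
    ∃ σ ∈ G, σ.symm i ∈ S ∧ σ.symm j ∈ S := by
  obtain ⟨σ, hσ, ⟨rfl, rfl⟩ | ⟨rfl, rfl⟩⟩ := hG a b i j hab hij <;> exact ⟨σ, hσ, by simp [ha, hb]⟩

end TwoHomogeneous

section BinaryCode

theorem zmod_two_eq_one_of_ne_zero {a : ZMod 2} (h : a ≠ 0) : a = 1 := by
  revert a
  decide

variable {m : ℕ} (C : Submodule (ZMod 2) (BV m))

theorem exists_hammingDist_le_one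
    (hpair : ∀ i j, i ≠ j → ∃ w ∈ C, hammingNorm w = 3 ∧ w i ≠ 0 ∧ w j ≠ 0) (v : BV m) :
    ∃ c ∈ C, hammingDist v c ≤ 1 := by
  suffices ∀ n, ∀ c ∈ C, hammingDist v c = n → ∃ c ∈ C, hammingDist v c ≤ 1 from
    this _ 0 C.zero_mem rfl
  intro n
  induction n using Nat.strong_induction_on with
  | _ n ih =>
  rintro c hc rfl
  by_cases hle : hammingDist v c ≤ 1
  · exact ⟨c, hc, hle⟩
  obtain ⟨i, hi, j, hj, hij⟩ := Finset.one_lt_card.mp (not_le.mp hle)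
  obtain ⟨w, hw, hw3, hwi, hwj⟩ := hpair i j hij
  have hxi : (v - c) i ≠ 0 := sub_ne_zero.mpr (Finset.mem_filter.mp hi).2
  have hxj : (v - c) j ≠ 0 := sub_ne_zero.mpr (Finset.mem_filter.mp hj).2
  have hnonzero {a b : ZMod 2} (ha : a ≠ 0) (hb : b ≠ 0) : a = b :=
    (zmod_two_eq_one_of_ne_zero ha).trans (zmod_two_eq_one_of_ne_zero hb).symm
  have hcloser := hammingDist_add_four_le hij (hnonzero hxi hwi) (hnonzero hxj hwj) hxi hxj
  rw [← hammingDist_eq_hammingNorm_sub, hw3, hammingDist_eq_hammingNorm_sub, sub_sub,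
    ← hammingDist_eq_hammingNorm_sub] at hcloser
  exact ih _ (by omega) (c + w) (C.add_mem hc hw) rfl

theorem exists_eq_single_one_of_hammingNorm_eq_one {x : BV m} (h : hammingNorm x = 1) :
    ∃ i, x = Pi.single i 1 := by
  obtain ⟨i, hi⟩ := exists_eq_single_of_hammingNorm_eq_one h
  have hxi : x i ≠ 0 := fun h0 => by
    rw [hi, h0, Pi.single_zero, hammingNorm_zero] at h
    exact zero_ne_one h
  exact ⟨i, hi.trans (by rw [zmod_two_eq_one_of_ne_zero hxi])⟩

variable {G : Subgroup (Perm (Fin m))}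

theorem exists_weight_three_mem_of_isTwoHomogeneous (hG : IsTwoHomogeneous G)
    (hInv : ∀ σ ∈ G, ∀ v ∈ C, (fun i => v (σ.symm i)) ∈ C) (hδ : IsMinDist (C : Set (BV m)) 3)
    (i j : Fin m) (hij : i ≠ j) : ∃ w ∈ C, hammingNorm w = 3 ∧ w i ≠ 0 ∧ w j ≠ 0 := by
  obtain ⟨u, hu, v, hv, -, huv⟩ := hδ.1
  rw [hammingDist_eq_hammingNorm_sub] at huv
  obtain ⟨a, ha, b, hb, hab⟩ := Finset.one_lt_card.mp (huv ▸ by norm_num : 1 < hammingNorm (u - v))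
  obtain ⟨σ, hσ, hi, hj⟩ := hG.exists_symm_apply_mem (S := {k | (u - v) k ≠ 0}) hab
    (Finset.mem_filter.mp ha).2 (Finset.mem_filter.mp hb).2 hij
  exact ⟨_, hInv σ hσ _ (C.sub_mem hu hv), (hammingNorm_comp_perm _ σ).trans huv, hi, hj⟩

theorem nbrTrans_one (htrans : ∀ i j, ∃ σ ∈ G, σ i = j)
    (hInv : ∀ σ ∈ G, ∀ v ∈ C, (fun i => v (σ.symm i)) ∈ C) {X : Set (Perm (BV m))}
    (hX : X = {g | ∃ σ ∈ G, ∃ c ∈ C, ∀ v, g v = (fun i => v (σ.symm i)) + c}) :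
    NbrTrans X (C : Set (BV m)) 1 := by
  have hmove : ∀ σ ∈ G, ∀ u v : BV m, v - (fun i => u (σ.symm i)) ∈ C → ∃ g ∈ X, g u = v :=
    fun σ hσ u v h => ⟨(σ.arrowCongr (Equiv.refl _)).trans (Equiv.addRight _),
      by rw [hX]; exact ⟨σ, hσ, _, h, fun _ => rfl⟩, add_sub_cancel _ _⟩
  rintro j hj u ⟨⟨c, hc, hu⟩, -⟩ v ⟨⟨c', hc', hv⟩, -⟩
  interval_cases j
  · rw [hammingDist_eq_zero] at hu hv
    subst hu hv
    exact hmove 1 G.one_mem u v (C.sub_mem hc' hc)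
  · rw [hammingDist_eq_hammingNorm_sub] at hu hv
    obtain ⟨i, hi⟩ := exists_eq_single_one_of_hammingNorm_eq_one hu
    obtain ⟨i', hi'⟩ := exists_eq_single_one_of_hammingNorm_eq_one hv
    obtain ⟨σ, hσ, rfl⟩ := htrans i i'
    obtain rfl := eq_add_of_sub_eq' hi
    obtain rfl := eq_add_of_sub_eq' hi'
    refine hmove σ hσ _ _ ?_
    convert C.sub_mem hc' (hInv σ hσ c hc) using 1
    funext k
    simp [Pi.single_apply, Equiv.symm_apply_eq]

end BinaryCode

theorem stmt9_general (m : ℕ)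
    (G : Subgroup (Perm (Fin m)))
    (hG : ∀ i j k l : Fin m, i ≠ j → k ≠ l →
      ∃ σ ∈ G, (σ i = k ∧ σ j = l) ∨ (σ i = l ∧ σ j = k))
    (C : Submodule (ZMod 2) (BV m))
    (hInv : ∀ σ ∈ G, ∀ v ∈ C, (fun i => v (σ.symm i)) ∈ C)
    (hδ : IsMinDist (C : Set (BV m)) 3)
    (X : Set (Perm (BV m)))
    (hX : X = {g | ∃ σ ∈ G, ∃ c ∈ C, ∀ v, g v = (fun i => v (σ.symm i)) + c}) :
    (∀ v : BV m, ∃! c, c ∈ (C : Set (BV m)) ∧ hammingDist v c ≤ 1) ∧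
    NbrTrans X (C : Set (BV m)) 1 := by
  have hpair := exists_weight_three_mem_of_isTwoHomogeneous C hG hInv hδ
  have h3 : 3 ≤ ENat.card (Fin m) := by
    obtain ⟨u, -, v, -, -, huv⟩ := hδ.1
    simpa [← huv] using hammingDist_le_card_fintype (x := u) (y := v)
  refine ⟨fun v => ?_, nbrTrans_one C (IsTwoHomogeneous.exists_apply_eq hG h3) hInv hX⟩
  obtain ⟨c, hc, hvc⟩ := exists_hammingDist_le_one C hpair v
  exact ⟨c, ⟨hc, hvc⟩, fun c' hc' => eq_of_hammingDist_le_one hδ.2 hc'.1 hc hc'.2 hvc⟩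

theorem stmt9 (m : ℕ) (hm : 5 ≤ m)
    (G : Subgroup (Perm (Fin m)))
    (hG : ∀ i j k l : Fin m, i ≠ j → k ≠ l →
      ∃ σ ∈ G, (σ i = k ∧ σ j = l) ∨ (σ i = l ∧ σ j = k))
    (C : Submodule (ZMod 2) (BV m))
    (hInv : ∀ σ ∈ G, ∀ v ∈ C, (fun i => v (σ.symm i)) ∈ C)
    (hδ : IsMinDist (C : Set (BV m)) 3)
    (X : Set (Perm (BV m)))
    (hX : X = {g | ∃ σ ∈ G, ∃ c ∈ C, ∀ v, g v = (fun i => v (σ.symm i)) + c}) :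
    (∀ v : BV m, ∃! c, c ∈ (C : Set (BV m)) ∧ hammingDist v c ≤ 1) ∧
    NbrTrans X (C : Set (BV m)) 1 :=
  stmt9_general m G hG C hInv hδ X hX

end Paper
end

section
/- Let C be an F_2-linear code in H(m,2) whose minimum distance δ satisfies 3 ≤ δ < m, such that for some integer λ ≥ 1 the set of weight-δ codewords of C forms a 2-(m,δ,λ) design (for every pair of distinct coordinates i,j ∈ M, exactly λ weight-δ codewords α ∈ C satisfy α_i = α_j = 1), and suppose C is self-orthogonal, i.e., C ⊆ C^⊥. Then δ ≥ √(m − 1) + 1. -/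
/-!
Fix a minimum-weight codeword `α` and a coordinate `i` in its support, and let `r` be the number
of minimum-weight codewords whose support contains `i`. Counting incidences with the points
`j ≠ i` gives `(m - 1) λ = r (δ - 1)`. Self-orthogonality makes every such support meet that of
`α` in an even number of points, hence in some point other than `i`; counting incidences with the
`δ - 1` points of `supp α \ {i}` then gives `(δ - 1) + (r - 1) ≤ (δ - 1) λ`. Eliminating `r`
yields `m - 1 ≤ (δ - 1)²`.
-/

open Equiv

namespace Paper

open Finset

section BlocksThroughPoint

variable {α ι : Type*} [DecidableEq ι] {T : Finset α} {blk : α → Finset ι}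
  {i : ι} {k lam : ℕ}

theorem sum_card_inter_blocks_eq {A : Finset ι} (hiA : i ∉ A)
    (hlam : ∀ j ≠ i, #{a ∈ T | j ∈ blk a} = lam) :
    ∑ a ∈ T, #(A ∩ blk a) = #A * lam := by
  have hcount : ∀ j ∈ A, #{a ∈ T | j ∈ blk a} = lam :=
    fun j hj => hlam j (ne_of_mem_of_not_mem hj hiA)
  calc ∑ a ∈ T, #(A ∩ blk a)
      = ∑ j ∈ A, #{a ∈ T | j ∈ blk a} := by
        simp_rw [card_filter, ← filter_mem_eq_inter, card_filter]
        exact sum_comm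
    _ = #A * lam := by rw [sum_congr rfl hcount, sum_const, smul_eq_mul]

theorem card_mul_pred_eq [Fintype ι] (hT : ∀ a ∈ T, i ∈ blk a ∧ #(blk a) = k)
    (hlam : ∀ j ≠ i, #{a ∈ T | j ∈ blk a} = lam) :
    #T * (k - 1) = (Fintype.card ι - 1) * lam := by
  have hblk : ∀ a ∈ T, #(univ.erase i ∩ blk a) = k - 1 := by
    intro a ha
    rw [erase_inter, univ_inter, card_erase_of_mem (hT a ha).1, (hT a ha).2]
  rw [← card_univ, ← card_erase_of_mem (mem_univ i),
    ← sum_card_inter_blocks_eq (notMem_erase i univ) hlam, sum_congr rfl hblk, sum_const,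
    smul_eq_mul]

theorem pred_add_card_pred_le_pred_mul [DecidableEq α] {a₀ : α} (ha₀ : a₀ ∈ T)
    (hT : ∀ a ∈ T, i ∈ blk a ∧ #(blk a) = k)
    (hlam : ∀ j ≠ i, #{a ∈ T | j ∈ blk a} = lam)
    (hmeet : ∀ a ∈ T, 2 ≤ #(blk a₀ ∩ blk a)) :
    (k - 1) + (#T - 1) ≤ (k - 1) * lam := by
  have hself : #((blk a₀).erase i ∩ blk a₀) = k - 1 := by
    rw [erase_inter, inter_self, card_erase_of_mem (hT a₀ ha₀).1, (hT a₀ ha₀).2]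
  have hother : ∀ a ∈ T.erase a₀, 1 ≤ #((blk a₀).erase i ∩ blk a) := by
    intro a ha
    have hi : i ∈ blk a₀ ∩ blk a := mem_inter.2 ⟨(hT a₀ ha₀).1, (hT a (mem_of_mem_erase ha)).1⟩
    rw [erase_inter, card_erase_of_mem hi]
    have := hmeet a (mem_of_mem_erase ha)
    omega
  calc (k - 1) + (#T - 1)
      = #((blk a₀).erase i ∩ blk a₀) + #(T.erase a₀) := by rw [hself, card_erase_of_mem ha₀]
    _ ≤ #((blk a₀).erase i ∩ blk a₀) + ∑ a ∈ T.erase a₀, #((blk a₀).erase i ∩ blk a) := by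
        gcongr
        simpa using card_nsmul_le_sum _ _ 1 hother
    _ = ∑ a ∈ T, #((blk a₀).erase i ∩ blk a) :=
        add_sum_erase T (fun a => #((blk a₀).erase i ∩ blk a)) ha₀
    _ = (k - 1) * lam := by
        rw [sum_card_inter_blocks_eq (notMem_erase i _) hlam, card_erase_of_mem (hT a₀ ha₀).1,
          (hT a₀ ha₀).2]

theorem card_pred_le_sq_of_two_le_card_inter [Fintype ι] [DecidableEq α] {a₀ : α} (ha₀ : a₀ ∈ T)
    (hT : ∀ a ∈ T, i ∈ blk a ∧ #(blk a) = k)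
    (hlam : ∀ j ≠ i, #{a ∈ T | j ∈ blk a} = lam)
    (hmeet : ∀ a ∈ T, 2 ≤ #(blk a₀ ∩ blk a)) :
    Fintype.card ι - 1 ≤ (k - 1) ^ 2 := by
  have hcount := card_mul_pred_eq hT hlam
  have hbound := pred_add_card_pred_le_pred_mul ha₀ hT hlam hmeet
  have hk : 2 ≤ k := by
    have := hmeet a₀ ha₀
    rwa [inter_self, (hT a₀ ha₀).2] at this
  have hT₀ : 1 ≤ #T := card_pos.2 ⟨a₀, ha₀⟩
  have hlam₀ : 0 < lam := by
    by_contra! h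
    simp only [nonpos_iff_eq_zero.1 h, mul_zero] at hbound
    omega
  refine le_of_mul_le_mul_right ?_ hlam₀
  -- multiply the second bound by `k - 1` and substitute `#T (k - 1) = (card ι - 1) λ`
  have := Nat.mul_le_mul_left (k - 1) hbound
  zify [hT₀, (by omega : 1 ≤ k)] at this hcount ⊢
  nlinarith

end BlocksThroughPoint

section BinaryCodes

variable {m : ℕ}

def supp (β : BV m) : Finset (Fin m) := {j | β j = 1}

@[simp]
theorem mem_supp {β : BV m} {j : Fin m} : j ∈ supp β ↔ β j = 1 := by
  simp [supp]

theorem hammingDist_zero_right_eq_card_supp (β : BV m) :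
    hammingDist β 0 = #(supp β) := by
  rw [hammingDist_zero_right, hammingNorm, supp]
  congr 1
  ext j
  simp only [mem_filter, mem_univ, true_and]
  generalize β j = x
  revert x
  decide

theorem sum_mul_eq_card_supp_inter (β γ : BV m) :
    ∑ j, β j * γ j = (#(supp β ∩ supp γ) : ZMod 2) := by
  rw [supp, supp, ← filter_and, natCast_card_filter]
  refine sum_congr rfl fun j _ => ?_
  generalize β j = x
  generalize γ j = y
  revert x y
  decide

theorem two_le_card_supp_inter_of_sum_mul_eq_zero {β γ : BV m} {i : Fin m}
    (horth : ∑ j, β j * γ j = 0) (hβ : β i = 1) (hγ : γ i = 1) :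
    2 ≤ #(supp β ∩ supp γ) := by
  rw [sum_mul_eq_card_supp_inter, ZMod.natCast_eq_zero_iff] at horth
  have : 0 < #(supp β ∩ supp γ) := card_pos.2 ⟨i, by simp [hβ, hγ]⟩
  omega

open Classical in
noncomputable def codewordsThrough (C : Submodule (ZMod 2) (BV m)) (w : ℕ) (i : Fin m) : Finset (BV m) :=
  {β | β ∈ C ∧ hammingDist β 0 = w ∧ β i = 1}

@[simp]
theorem mem_codewordsThrough {C : Submodule (ZMod 2) (BV m)} {w : ℕ} {i : Fin m} {β : BV m} :
    β ∈ codewordsThrough C w i ↔ β ∈ C ∧ hammingDist β 0 = w ∧ β i = 1 := by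
  simp only [codewordsThrough, mem_filter, mem_univ, true_and]

theorem card_filter_codewordsThrough (C : Submodule (ZMod 2) (BV m)) (w : ℕ) (i j : Fin m) :
    #{β ∈ codewordsThrough C w i | j ∈ supp β} =
      {α : BV m | α ∈ C ∧ hammingDist α 0 = w ∧ α i = 1 ∧ α j = 1}.ncard := by
  rw [← Set.ncard_coe_finset]
  congr 1
  ext β
  simp [and_assoc]

theorem exists_mem_codewordsThrough {C : Submodule (ZMod 2) (BV m)} {δ : ℕ}
    (hδ : IsMinDist (C : Set (BV m)) δ) : ∃ α i, α ∈ codewordsThrough C δ i := by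
  obtain ⟨⟨u, hu, v, hv, huv, hd⟩, -⟩ := hδ
  have hwt : hammingDist (u - v) 0 = δ := by
    rw [hammingDist_zero_right, ← neg_add_eq_sub, ← hammingDist_eq_hammingNorm,
      hammingDist_comm, hd]
  obtain ⟨i, hi⟩ : (supp (u - v)).Nonempty := by
    rw [← card_pos, ← hammingDist_zero_right_eq_card_supp, hwt, ← hd]
    exact hammingDist_pos.2 huv
  exact ⟨u - v, i, mem_codewordsThrough.2 ⟨sub_mem hu hv, hwt, mem_supp.1 hi⟩⟩

end BinaryCodes

theorem sqrt_sub_one_add_one_le {m d : ℕ} (hm : 1 ≤ m) (hd : 1 ≤ d)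
    (h : m - 1 ≤ (d - 1) ^ 2) : √((m : ℝ) - 1) + 1 ≤ d := by
  have hsq : (m : ℝ) - 1 ≤ ((d : ℝ) - 1) ^ 2 := by exact_mod_cast h
  have hd' : (0 : ℝ) ≤ d - 1 := by simpa using hd
  linarith [(Real.sqrt_le_left hd').2 hsq]

theorem stmt14_general (m δ lam : ℕ) (C : Submodule (ZMod 2) (BV m))
    (hδ : IsMinDist (C : Set (BV m)) δ)
    (hdes : ∀ i j : Fin m, i ≠ j →
      {α : BV m | α ∈ C ∧ hammingDist α 0 = δ ∧ α i = 1 ∧ α j = 1}.ncard = lam)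
    -- `C` is self-orthogonal
    (hself : (C : Set (BV m)) ⊆ dualCode (C : Set (BV m))) :
    Real.sqrt ((m : ℝ) - 1) + 1 ≤ (δ : ℝ) := by
  obtain ⟨α, i, hα⟩ := exists_mem_codewordsThrough hδ
  have hblocks : ∀ β ∈ codewordsThrough C δ i, i ∈ supp β ∧ #(supp β) = δ := by
    intro β hβ
    obtain ⟨-, hwt, hi⟩ := mem_codewordsThrough.1 hβ
    exact ⟨mem_supp.2 hi, hammingDist_zero_right_eq_card_supp β ▸ hwt⟩
  have hmeet : ∀ β ∈ codewordsThrough C δ i, 2 ≤ #(supp α ∩ supp β) := by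
    intro β hβ
    obtain ⟨hαC, -, hαi⟩ := mem_codewordsThrough.1 hα
    obtain ⟨hβC, -, hβi⟩ := mem_codewordsThrough.1 hβ
    exact two_le_card_supp_inter_of_sum_mul_eq_zero (hself hβC α hαC) hαi hβi
  have hbound := card_pred_le_sq_of_two_le_card_inter hα hblocks
    (fun j hj => (card_filter_codewordsThrough C δ i j).trans (hdes i j hj.symm)) hmeet
  rw [Fintype.card_fin] at hbound
  exact sqrt_sub_one_add_one_le i.pos ((hblocks α hα).2 ▸ card_pos.2 ⟨i, (hblocks α hα).1⟩)
    hbound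

theorem stmt14 (m δ lam : ℕ) (C : Submodule (ZMod 2) (BV m))
    (hδ : IsMinDist (C : Set (BV m)) δ) (h3 : 3 ≤ δ) (hlt : δ < m)
    (hlam : 1 ≤ lam)
    (hdes : ∀ i j : Fin m, i ≠ j →
      {α : BV m | α ∈ C ∧ hammingDist α 0 = δ ∧ α i = 1 ∧ α j = 1}.ncard = lam)
    -- `C` is self-orthogonal
    (hself : (C : Set (BV m)) ⊆ dualCode (C : Set (BV m))) :
    Real.sqrt ((m : ℝ) - 1) + 1 ≤ (δ : ℝ) :=
  stmt14_general m δ lam C hδ hdes hself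

end Paper
end

section
/- Let 𝒞 be a code in H(m,2) with minimum distance at least 5, and suppose there exist: an F_2-linear subcode C ⊆ 𝒞 with minimum distance δ ≥ 5; a subgroup X_0 of the stabiliser of the zero vector in Aut(C) such that, setting X = T_C ⋊ X_0 = {v ↦ v^σ + c : (v ↦ v^σ) ∈ X_0, c ∈ C}, one has X ≤ Aut(𝒞) and C is (X,2)-neighbour-transitive; and a set S of additive cosets of C in V = F_2^m such that 𝒞 is the union of the cosets in S and Aut(𝒞) permutes the cosets in S transitively. Then 𝒞 is 2-neighbour-transitive, i.e., (Aut(𝒞),2)-neighbour-transitive. -/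
/-! A vertex at distance `j ≤ 2` from `CC` is at distance `j` from a codeword in some coset
`s ∈ S`; an automorphism of `CC` carrying `s` onto `C` moves it into `C_j`, because `C ⊆ CC`.
Two vertices of `C_j` are joined by an element of `X ≤ Aut(CC)`, so composing these maps shows
that `Aut(CC)` is transitive on `CC_j`. -/


open Equiv

namespace Paper

section Automorphisms

variable {m : ℕ}

theorem IsB2Aut.mul {g h : Perm (BV m)} (hg : IsB2Aut g) (hh : IsB2Aut h) :
    IsB2Aut (g * h) := by
  obtain ⟨σ, c, hg⟩ := hg
  obtain ⟨τ, d, hh⟩ := hh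
  refine ⟨σ * τ, (fun i => d (σ.symm i)) + c, fun v => ?_⟩
  rw [Perm.mul_apply, hh, hg, ← add_assoc]
  rfl

theorem IsB2Aut.inv {g : Perm (BV m)} (hg : IsB2Aut g) : IsB2Aut g⁻¹ := by
  obtain ⟨σ, c, hg⟩ := hg
  refine ⟨σ.symm, fun i => c (σ i), fun v => g.injective ((g.apply_symm_apply v).trans ?_)⟩
  rw [hg]
  funext i
  simp only [Pi.add_apply, symm_symm, apply_symm_apply, add_assoc,
    CharTwo.add_self_eq_zero, add_zero]

theorem isB2Aut_one : IsB2Aut (1 : Perm (BV m)) :=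
  ⟨1, 0, fun _ => (add_zero _).symm⟩

theorem isB2Aut_addRight (c : BV m) : IsB2Aut (Equiv.addRight c) :=
  ⟨1, c, fun _ => rfl⟩

theorem IsB2Aut.hammingDist_apply {g : Perm (BV m)} (hg : IsB2Aut g) (u v : BV m) :
    hammingDist (g u) (g v) = hammingDist u v := by
  obtain ⟨σ, c, hg⟩ := hg
  rw [hg, hg]
  calc hammingDist ((fun i => u (σ.symm i)) + c) ((fun i => v (σ.symm i)) + c)
      = hammingDist (fun i => u (σ.symm i)) (fun i => v (σ.symm i)) :=
        hammingDist_comp (fun i x => x + c i) fun i => add_left_injective (c i)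
    _ = hammingDist u v := Finset.card_equiv σ.symm fun i => by simp

def codeAut (D : Set (BV m)) : Subgroup (Perm (BV m)) where
  carrier := {g | IsB2Aut g ∧ g '' D = D}
  mul_mem' := fun ⟨hg, hgD⟩ ⟨hh, hhD⟩ =>
    ⟨hg.mul hh, by rw [Perm.coe_mul, Set.image_comp, hhD, hgD]⟩
  one_mem' := ⟨isB2Aut_one, Set.image_id D⟩
  inv_mem' := fun {g} ⟨hg, hgD⟩ => ⟨hg.inv, by
    conv_lhs => rw [← hgD]
    exact g.symm_image_image D⟩

end Automorphisms

section DistSet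

variable {m : ℕ} {Q : Type*} [DecidableEq Q]

theorem mem_distSet_image {g : (Fin m → Q) → Fin m → Q}
    (hg : ∀ u v, hammingDist (g u) (g v) = hammingDist u v) {D : Set (Fin m → Q)} {j : ℕ}
    {u : Fin m → Q} (hu : u ∈ distSet D j) : g u ∈ distSet (g '' D) j := by
  obtain ⟨⟨c, hc, hdist⟩, hmin⟩ := hu
  refine ⟨⟨g c, Set.mem_image_of_mem g hc, (hg u c).trans hdist⟩, ?_⟩
  rintro _ ⟨d, hd, rfl⟩
  exact (hg u d).symm ▸ hmin d hd

theorem mem_distSet_of_subset {D E : Set (Fin m → Q)} (hED : E ⊆ D) {j : ℕ}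
    {u c : Fin m → Q} (hu : u ∈ distSet D j) (hc : c ∈ E) (hdist : hammingDist u c = j) :
    u ∈ distSet E j :=
  ⟨⟨c, hc, hdist⟩, fun d hd => hu.2 d (hED hd)⟩

theorem NbrTrans.of_subset_of_forall_exists {G : Subgroup (Perm (Fin m → Q))}
    {X : Set (Perm (Fin m → Q))} {C D : Set (Fin m → Q)} {s : ℕ} (hXG : X ⊆ G)
    (hX : NbrTrans X C s)
    (hmove : ∀ j ≤ s, ∀ u ∈ distSet D j, ∃ g ∈ G, g u ∈ distSet C j) :
    NbrTrans (G : Set (Perm (Fin m → Q))) D s := by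
  intro j hj u hu v hv
  obtain ⟨g, hgG, hgu⟩ := hmove j hj u hu
  obtain ⟨h, hhG, hhv⟩ := hmove j hj v hv
  obtain ⟨x, hxX, hx⟩ := hX j hj (g u) hgu (h v) hhv
  refine ⟨h⁻¹ * x * g, G.mul_mem (G.mul_mem (G.inv_mem hhG) (hXG hxX)) hgG, ?_⟩
  rw [Perm.mul_apply, Perm.mul_apply, hx]
  exact h.symm_apply_apply v

end DistSet

theorem image_add_left_eq_self_of_zero_mem {G : Type*} [AddGroup G] (H : AddSubgroup G) {v : G}
    (h0 : (0 : G) ∈ (fun c => v + c) '' (H : Set G)) : (fun c => v + c) '' (H : Set G) = H := by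
  obtain ⟨c, hc, hvc⟩ := h0
  have hv : v ∈ H := (eq_neg_of_add_eq_zero_left hvc) ▸ H.neg_mem hc
  ext x
  constructor
  · rintro ⟨d, hd, rfl⟩
    exact H.add_mem hv hd
  · intro hx
    exact ⟨-v + x, H.add_mem (H.neg_mem hv) hx, add_neg_cancel_left v x⟩

theorem exists_codeAut_mem_distSet {m : ℕ} {CC C : Set (BV m)} {S : Set (Set (BV m))}
    (hCCS : CC = ⋃₀ S) (hC : C ⊆ CC)
    (hS : ∀ s ∈ S, ∃ g ∈ codeAut CC, g '' s = C) {j : ℕ} {u : BV m}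
    (hu : u ∈ distSet CC j) : ∃ g ∈ codeAut CC, g u ∈ distSet C j := by
  obtain ⟨c, hcCC, hdist⟩ := hu.1
  obtain ⟨s, hsS, hcs⟩ := hCCS ▸ hcCC
  obtain ⟨g, ⟨hg, hgCC⟩, hgs⟩ := hS s hsS
  have hgu : g u ∈ distSet CC j := hgCC ▸ mem_distSet_image hg.hammingDist_apply hu
  exact ⟨g, ⟨hg, hgCC⟩, mem_distSet_of_subset hC hgu (hgs ▸ Set.mem_image_of_mem g hcs)
    ((hg.hammingDist_apply u c).trans hdist)⟩

theorem stmt15_general (m : ℕ) (CC : Set (BV m))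
    -- `C` is a linear subcode of `CC` with minimum distance `δ ≥ 5`
    (C : Submodule (ZMod 2) (BV m)) (hsub : (C : Set (BV m)) ⊆ CC)
    -- `X_0` is a subgroup of the stabiliser of the zero vector in `Aut(C)`
    (X0 : Subgroup (Perm (BV m)))
    (hX0 : ∀ g ∈ X0, IsB2Aut g ∧ g '' (C : Set (BV m)) = (C : Set (BV m)) ∧ g (0 : BV m) = 0)
    -- `X = T_C ⋊ X_0`
    (X : Set (Perm (BV m)))
    (hX : X = {g | ∃ c ∈ C, ∃ y ∈ X0, g = Equiv.addRight c * y})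
    -- `X ≤ Aut(CC)` and `C` is `(X,2)`-neighbour-transitive
    (hXCC : ∀ g ∈ X, g '' CC = CC)
    (hNT : NbrTrans X (C : Set (BV m)) 2)
    -- `CC` is a union of a set `S` of cosets of `C`, permuted transitively by `Aut(CC)`
    (S : Set (Set (BV m)))
    (hS : ∀ s ∈ S, ∃ v : BV m, s = (fun c => v + c) '' (C : Set (BV m)))
    (hUnion : CC = ⋃₀ S)
    (hTrans : ∀ s1 ∈ S, ∀ s2 ∈ S, ∃ g : Perm (BV m),
      IsB2Aut g ∧ g '' CC = CC ∧ g '' s1 = s2) :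
    NbrTrans {g : Perm (BV m) | IsB2Aut g ∧ g '' CC = CC} CC 2 := by
  have hCS : (C : Set (BV m)) ∈ S := by
    obtain ⟨s, hsS, h0s⟩ := hUnion ▸ hsub C.zero_mem
    obtain ⟨v, rfl⟩ := hS s hsS
    have hvC : (fun c => v + c) '' (C : Set (BV m)) = C :=
      image_add_left_eq_self_of_zero_mem C.toAddSubgroup h0s
    rwa [hvC] at hsS
  have hXAut : X ⊆ codeAut CC := by
    intro g hgX
    obtain ⟨c, -, y, hy, rfl⟩ := hX ▸ hgX
    exact ⟨(isB2Aut_addRight c).mul (hX0 y hy).1, hXCC _ hgX⟩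
  refine hNT.of_subset_of_forall_exists hXAut fun j _ u hu =>
    exists_codeAut_mem_distSet hUnion hsub (fun s hs => ?_) hu
  obtain ⟨g, hg, hgCC, hgs⟩ := hTrans s hs C hCS
  exact ⟨g, ⟨hg, hgCC⟩, hgs⟩

theorem stmt15 (m : ℕ) (CC : Set (BV m))
    (hCCδ : ∀ u ∈ CC, ∀ v ∈ CC, u ≠ v → 5 ≤ hammingDist u v)
    -- `C` is a linear subcode of `CC` with minimum distance `δ ≥ 5`
    (C : Submodule (ZMod 2) (BV m)) (hsub : (C : Set (BV m)) ⊆ CC)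
    (δ : ℕ) (hδ : IsMinDist (C : Set (BV m)) δ) (h5 : 5 ≤ δ)
    -- `X_0` is a subgroup of the stabiliser of the zero vector in `Aut(C)`
    (X0 : Subgroup (Perm (BV m)))
    (hX0 : ∀ g ∈ X0, IsB2Aut g ∧ g '' (C : Set (BV m)) = (C : Set (BV m)) ∧ g (0 : BV m) = 0)
    -- `X = T_C ⋊ X_0`
    (X : Set (Perm (BV m)))
    (hX : X = {g | ∃ c ∈ C, ∃ y ∈ X0, g = Equiv.addRight c * y})
    -- `X ≤ Aut(CC)` and `C` is `(X,2)`-neighbour-transitive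
    (hXCC : ∀ g ∈ X, g '' CC = CC)
    (hNT : NbrTrans X (C : Set (BV m)) 2)
    -- `CC` is a union of a set `S` of cosets of `C`, permuted transitively by `Aut(CC)`
    (S : Set (Set (BV m)))
    (hS : ∀ s ∈ S, ∃ v : BV m, s = (fun c => v + c) '' (C : Set (BV m)))
    (hUnion : CC = ⋃₀ S)
    (hTrans : ∀ s1 ∈ S, ∀ s2 ∈ S, ∃ g : Perm (BV m),
      IsB2Aut g ∧ g '' CC = CC ∧ g '' s1 = s2) :
    NbrTrans {g : Perm (BV m) | IsB2Aut g ∧ g '' CC = CC} CC 2 :=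
  stmt15_general m CC C hsub X0 hX0 X hX hXCC hNT S hS hUnion hTrans

end Paper
end
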